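/- Under the balanced within-stratum design, the absolute difference between the overall difference-in-means estimator and the inverse-probability-weighting estimator is bounded by (1/π̂_inf − 1) times the stratum-size-weighted average of the absolute stratum-level effects: |τ̂_DIM − τ̂_IPW| ≤ (1/π̂_inf − 1) · Σ_{x ∈ 𝒳, n_x > 0} (n_x / n) · |τ̂_HTE(x)|, where π̂_inf = min_{x ∈ 𝒳} π̂(x). -/

import Mathlib

open Finset

noncomputable section

variable {N : ℕ} {𝒳 : Type*} [Fintype 𝒳] [DecidableEq 𝒳]

/-- Number of sampled units in stratum `x`: `n_x = #{i : S_i = 1, X_i = x}`. -/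
def nStratum (X : Fin N → 𝒳) (S : Fin N → Bool) (x : 𝒳) : ℕ :=
  (univ.filter fun i => S i = true ∧ X i = x).card

/-- Total number of sampled units: `n = #{i : S_i = 1}`. -/
def nSample (S : Fin N → Bool) : ℕ :=
  (univ.filter fun i => S i = true).card

/-- Stratum-level difference-in-means estimator `τ̂_HTE(x)`. -/
def tauHTE (X : Fin N → 𝒳) (S W : Fin N → Bool) (Y1 Y0 : Fin N → ℝ) (x : 𝒳) : ℝ :=
  (2 / (nStratum X S x : ℝ)) *
      ∑ i ∈ univ.filter (fun i => S i = true ∧ X i = x ∧ W i = true), Y1 i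
    - (2 / (nStratum X S x : ℝ)) *
      ∑ i ∈ univ.filter (fun i => S i = true ∧ X i = x ∧ W i = false), Y0 i

/-- Overall difference-in-means estimator `τ̂_DIM`. -/
def tauDIM (S W : Fin N → Bool) (Y1 Y0 : Fin N → ℝ) : ℝ :=
  (1 / ((univ.filter fun i => S i = true ∧ W i = true).card : ℝ)) *
      ∑ i ∈ univ.filter (fun i => S i = true ∧ W i = true), Y1 i
    - (1 / ((univ.filter fun i => S i = true ∧ W i = false).card : ℝ)) *
      ∑ i ∈ univ.filter (fun i => S i = true ∧ W i = false), Y0 i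

/-- Inverse-probability-weighting estimator `τ̂_IPW` with weight function `π̂`. -/
def tauIPW (X : Fin N → 𝒳) (S W : Fin N → Bool) (Y1 Y0 : Fin N → ℝ) (piHat : 𝒳 → ℝ) : ℝ :=
  (1 / ((univ.filter fun i => S i = true ∧ W i = true).card : ℝ)) *
      ∑ i ∈ univ.filter (fun i => S i = true ∧ W i = true), Y1 i / piHat (X i)
    - (1 / ((univ.filter fun i => S i = true ∧ W i = false).card : ℝ)) *
      ∑ i ∈ univ.filter (fun i => S i = true ∧ W i = false), Y0 i / piHat (X i)

/-- Balanced within-stratum design: in every nonempty stratum, the number of sampled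
treated units equals the number of sampled control units, and both are positive. -/
def BalancedDesign (X : Fin N → 𝒳) (S W : Fin N → Bool) : Prop :=
  ∀ x : 𝒳, 0 < nStratum X S x →
    (univ.filter fun i => S i = true ∧ X i = x ∧ W i = true).card =
        (univ.filter fun i => S i = true ∧ X i = x ∧ W i = false).card ∧
    0 < (univ.filter fun i => S i = true ∧ X i = x ∧ W i = true).card

/-! Since each stratum is balanced, the treated and control arms both have `n / 2` units, so
`τ̂_DIM − τ̂_IPW` is the `1/(n/2)`-weighted sum of `(1 − 1/π̂(X_i)) Y_i` over treated units minus
the same over controls. Grouping by stratum, the contribution of stratum `x` is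
`(1 − 1/π̂(x)) (n_x / n) τ̂_HTE(x)`, and `|1 − 1/π̂(x)| = 1/π̂(x) − 1 ≤ 1/π̂_inf − 1`. -/

def armSample (S W : Fin N → Bool) (w : Bool) : Finset (Fin N) :=
  univ.filter fun i => S i = true ∧ W i = w

def armStratum (X : Fin N → 𝒳) (S W : Fin N → Bool) (x : 𝒳) (w : Bool) : Finset (Fin N) :=
  univ.filter fun i => S i = true ∧ X i = x ∧ W i = w

theorem abs_sum_mul_le_of_abs_le {ι : Type*} (s : Finset ι) (a c : ι → ℝ) {M : ℝ}
    (ha : ∀ x ∈ s, |a x| ≤ M) : |∑ x ∈ s, a x * c x| ≤ M * ∑ x ∈ s, |c x| := by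
  rw [mul_sum]
  refine (abs_sum_le_sum_abs _ _).trans (sum_le_sum fun x hx => ?_)
  rw [abs_mul]
  exact mul_le_mul_of_nonneg_right (ha x hx) (abs_nonneg _)

theorem abs_one_sub_one_div_le {p q : ℝ} (hq : 0 < q) (hqp : q ≤ p) (hp : p ≤ 1) :
    |1 - 1 / p| ≤ 1 / q - 1 := by
  have hp_pos : 0 < p := hq.trans_le hqp
  rw [abs_of_nonpos (by rw [sub_nonpos, le_div_iff₀ hp_pos]; linarith)]
  linarith [one_div_le_one_div_of_le hq hqp]

section Estimators

variable (X : Fin N → 𝒳) (S W : Fin N → Bool) (Y1 Y0 : Fin N → ℝ)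

omit [Fintype 𝒳] in
theorem filter_armSample_eq_armStratum (x : 𝒳) (w : Bool) :
    (armSample S W w).filter (X · = x) = armStratum X S W x w := by
  ext i
  simp only [armSample, armStratum, mem_filter, mem_univ, true_and]
  tauto

theorem sum_armSample_eq_sum_armStratum {M : Type*} [AddCommMonoid M] (w : Bool)
    (f : Fin N → M) :
    ∑ i ∈ armSample S W w, f i = ∑ x, ∑ i ∈ armStratum X S W x w, f i := by
  simp only [← filter_armSample_eq_armStratum, sum_fiberwise]

theorem sum_nStratum : ∑ x, nStratum X S x = nSample S := by
  rw [nSample, card_eq_sum_card_fiberwise fun i _ => mem_univ (X i)]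
  simp only [nStratum, filter_filter]

omit [Fintype 𝒳] in
theorem card_armStratum_add_card_armStratum (x : 𝒳) :
    #(armStratum X S W x true) + #(armStratum X S W x false) = nStratum X S x := by
  have split := card_filter_add_card_filter_not
    (s := univ.filter fun i => S i = true ∧ X i = x) (fun i => W i = true)
  simp only [filter_filter, Bool.not_eq_true, and_assoc] at split
  exact split

omit [Fintype 𝒳] in
theorem sum_armStratum_comp_mul (x : 𝒳) (w : Bool) (g : 𝒳 → ℝ) (f : Fin N → ℝ) :
    ∑ i ∈ armStratum X S W x w, g (X i) * f i = g x * ∑ i ∈ armStratum X S W x w, f i := by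
  rw [mul_sum]
  refine sum_congr rfl fun i hi => ?_
  rw [(mem_filter.mp hi).2.2.1]

omit [Fintype 𝒳] in
theorem nStratum_div_two_mul_tauHTE (x : 𝒳) :
    (nStratum X S x : ℝ) / 2 * tauHTE X S W Y1 Y0 x
      = ∑ i ∈ armStratum X S W x true, Y1 i - ∑ i ∈ armStratum X S W x false, Y0 i := by
  have hcard := card_armStratum_add_card_armStratum X S W x
  rcases eq_or_ne (nStratum X S x) 0 with hx | hx
  · have hA : armStratum X S W x true = ∅ := card_eq_zero.mp (by omega)
    have hB : armStratum X S W x false = ∅ := card_eq_zero.mp (by omega)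
    simp [hx, hA, hB]
  · simp only [tauHTE, armStratum]
    field_simp

omit [Fintype 𝒳] [DecidableEq 𝒳] in
theorem tauDIM_sub_tauIPW_eq (piHat : 𝒳 → ℝ) :
    tauDIM S W Y1 Y0 - tauIPW X S W Y1 Y0 piHat
      = 1 / #(armSample S W true) * ∑ i ∈ armSample S W true, (1 - 1 / piHat (X i)) * Y1 i
        - 1 / #(armSample S W false) * ∑ i ∈ armSample S W false, (1 - 1 / piHat (X i)) * Y0 i := by
  have weighted_sum (s : Finset (Fin N)) (Y : Fin N → ℝ) :
      ∑ i ∈ s, (1 - 1 / piHat (X i)) * Y i = ∑ i ∈ s, Y i - ∑ i ∈ s, Y i / piHat (X i) := by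
    rw [← sum_sub_distrib]
    exact sum_congr rfl fun _ _ => by ring
  rw [weighted_sum, weighted_sum, tauDIM, tauIPW, armSample, armSample]
  ring

variable {X S W}

omit [Fintype 𝒳] in
theorem BalancedDesign.card_armStratum_true_eq_false (hbal : BalancedDesign X S W) (x : 𝒳) :
    #(armStratum X S W x true) = #(armStratum X S W x false) := by
  rcases (nStratum X S x).eq_zero_or_pos with hx | hx
  · have := card_armStratum_add_card_armStratum X S W x
    omega
  · exact (hbal x hx).1

theorem BalancedDesign.two_mul_card_armSample (hbal : BalancedDesign X S W) (w : Bool) :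
    2 * #(armSample S W w) = nSample S := by
  rw [← sum_nStratum X S, card_eq_sum_ones, sum_armSample_eq_sum_armStratum X, mul_sum]
  refine sum_congr rfl fun x _ => ?_
  rw [← card_eq_sum_ones, ← card_armStratum_add_card_armStratum X S W x]
  cases w <;> rw [hbal.card_armStratum_true_eq_false x] <;> ring

theorem BalancedDesign.tauDIM_sub_tauIPW_eq_sum (hbal : BalancedDesign X S W) (piHat : 𝒳 → ℝ) :
    tauDIM S W Y1 Y0 - tauIPW X S W Y1 Y0 piHat
      = ∑ x, (1 - 1 / piHat x) * ((nStratum X S x : ℝ) / nSample S * tauHTE X S W Y1 Y0 x) := by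
  have hcard : #(armSample S W false) = #(armSample S W true) := by
    have := hbal.two_mul_card_armSample false
    have := hbal.two_mul_card_armSample true
    omega
  have hn : (nSample S : ℝ) = 2 * #(armSample S W true) := by
    exact_mod_cast (hbal.two_mul_card_armSample true).symm
  rw [tauDIM_sub_tauIPW_eq, hcard, ← mul_sub, sum_armSample_eq_sum_armStratum X,
    sum_armSample_eq_sum_armStratum X, ← sum_sub_distrib, mul_sum]
  refine sum_congr rfl fun x _ => ?_
  rw [sum_armStratum_comp_mul X S W x true (fun y => 1 - 1 / piHat y),
    sum_armStratum_comp_mul X S W x false (fun y => 1 - 1 / piHat y), ← mul_sub,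
    ← nStratum_div_two_mul_tauHTE, hn]
  ring

end Estimators

theorem abs_tauDIM_sub_tauIPW_le_general
    [Nonempty 𝒳]
    (X : Fin N → 𝒳) (S W : Fin N → Bool) (Y1 Y0 : Fin N → ℝ) (piHat : 𝒳 → ℝ)
    (hpi : ∀ x, 0 < piHat x ∧ piHat x ≤ 1)
    (hbal : BalancedDesign X S W) :
    |tauDIM S W Y1 Y0 - tauIPW X S W Y1 Y0 piHat| ≤
      (1 / (univ.inf' univ_nonempty piHat) - 1) *
        ∑ x ∈ univ.filter (fun x => 0 < nStratum X S x),
          ((nStratum X S x : ℝ) / (nSample S : ℝ)) * |tauHTE X S W Y1 Y0 x| := by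
  obtain ⟨x₀, -, hx₀⟩ := exists_mem_eq_inf' univ_nonempty piHat
  have hinf_pos : 0 < univ.inf' univ_nonempty piHat := hx₀ ▸ (hpi x₀).1
  have hweight (x : 𝒳) (_ : x ∈ univ) : |1 - 1 / piHat x| ≤ 1 / univ.inf' univ_nonempty piHat - 1 :=
    abs_one_sub_one_div_le hinf_pos (inf'_le _ (mem_univ x)) (hpi x).2
  have hdrop_empty_strata : ∑ x ∈ univ.filter (fun x => 0 < nStratum X S x),
      ((nStratum X S x : ℝ) / nSample S) * |tauHTE X S W Y1 Y0 x|
        = ∑ x, |(nStratum X S x : ℝ) / nSample S * tauHTE X S W Y1 Y0 x| := by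
    rw [sum_filter_of_ne fun x _ hx => Nat.pos_of_ne_zero fun h => hx (by simp [h])]
    simp only [abs_mul, abs_div, Nat.abs_cast]
  rw [hbal.tauDIM_sub_tauIPW_eq_sum, hdrop_empty_strata]
  exact abs_sum_mul_le_of_abs_le _ _ _ hweight

/-- Under the balanced within-stratum design, the absolute difference between the overall
difference-in-means estimator and the inverse-probability-weighting estimator is bounded
by `(1/π̂_inf − 1)` times the stratum-size-weighted average of the absolute stratum-level
effects, where `π̂_inf = min_{x ∈ 𝒳} π̂(x)`. -/
theorem abs_tauDIM_sub_tauIPW_le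
    [Nonempty 𝒳]
    (X : Fin N → 𝒳) (S W : Fin N → Bool) (Y1 Y0 : Fin N → ℝ) (piHat : 𝒳 → ℝ)
    (hpi : ∀ x, 0 < piHat x ∧ piHat x ≤ 1)
    (hn : 0 < nSample S) (hbal : BalancedDesign X S W) :
    |tauDIM S W Y1 Y0 - tauIPW X S W Y1 Y0 piHat| ≤
      (1 / (univ.inf' univ_nonempty piHat) - 1) *
        ∑ x ∈ univ.filter (fun x => 0 < nStratum X S x),
          ((nStratum X S x : ℝ) / (nSample S : ℝ)) * |tauHTE X S W Y1 Y0 x| :=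
  abs_tauDIM_sub_tauIPW_le_general X S W Y1 Y0 piHat hpi hbal
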